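/- Let d ≥ 1, let A : ℝ × ℝ^d → ℝ^d be twice continuously differentiable, let D : ℝ × ℝ^d → ℝ^{d×d} be twice continuously differentiable in x, and let p : ℝ × ℝ^d → ℝ be everywhere positive and three times continuously differentiable (jointly in (t,x)), satisfying ∂_t p = −∇_x·(A p) + (1/2)∇_x·(D ∇_x p). Then the score S := ∇_x log p satisfies the Score-fPDE ∂_t S = ∇_x [ (1/2)∇_x·(D S) + (1/2)⟨S, D S⟩ − ⟨A, S⟩ − ∇_x·A ]. -/

import Mathlib

/-- Partial derivative in the `i`-th coordinate direction of `ℝ^d`. -/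
noncomputable def pd {d : ℕ} (i : Fin d) (f : EuclideanSpace ℝ (Fin d) → ℝ)
    (x : EuclideanSpace ℝ (Fin d)) : ℝ :=
  fderiv ℝ f x (EuclideanSpace.single i 1)

variable {d : ℕ}
abbrev E (d : ℕ) := EuclideanSpace ℝ (Fin d)

lemma pd_congr {f g : E d → ℝ} (h : ∀ y, f y = g y) (i : Fin d) (x : E d) :
    pd i f x = pd i g x := by
  have : f = g := funext h
  rw [this]

lemma pd_mul {f g : E d → ℝ} {x : E d} (hf : DifferentiableAt ℝ f x)
    (hg : DifferentiableAt ℝ g x) (i : Fin d) :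
    pd i (fun y => f y * g y) x = pd i f x * g x + f x * pd i g x := by
  simp [pd, fderiv_fun_mul hf hg]; ring

lemma pd_sum {ι : Type*} (s : Finset ι) {f : ι → E d → ℝ} {x : E d}
    (hf : ∀ a ∈ s, DifferentiableAt ℝ (f a) x) (i : Fin d) :
    pd i (fun y => ∑ a ∈ s, f a y) x = ∑ a ∈ s, pd i (f a) x := by
  simp [pd, fderiv_fun_sum hf]

lemma pd_log {f : E d → ℝ} {x : E d} (hf : DifferentiableAt ℝ f x) (h0 : f x ≠ 0) (i : Fin d) :
    pd i (fun y => Real.log (f y)) x = pd i f x / f x := by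
  have h := (Real.hasDerivAt_log h0).comp_hasFDerivAt x hf.hasFDerivAt
  have h' : fderiv ℝ (fun y => Real.log (f y)) x = (f x)⁻¹ • fderiv ℝ f x := h.fderiv
  simp [pd, h']
  field_simp

lemma pd_inv {g : E d → ℝ} {x : E d} (hg : DifferentiableAt ℝ g x) (h0 : g x ≠ 0) (i : Fin d) :
    pd i (fun y => (g y)⁻¹) x = -pd i g x / (g x)^2 := by
  have h := ((hasDerivAt_inv h0).comp_hasFDerivAt x hg.hasFDerivAt)
  have h' : fderiv ℝ (fun y => (g y)⁻¹) x = -(g x ^ 2)⁻¹ • fderiv ℝ g x := h.fderiv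
  simp [pd, h']
  field_simp

lemma diff_inv {g : E d → ℝ} {x : E d} (hg : DifferentiableAt ℝ g x) (h0 : g x ≠ 0) :
    DifferentiableAt ℝ (fun y => (g y)⁻¹) x :=
  ((hasDerivAt_inv h0).comp_hasFDerivAt x hg.hasFDerivAt).differentiableAt

lemma pd_div {f g : E d → ℝ} {x : E d} (hf : DifferentiableAt ℝ f x)
    (hg : DifferentiableAt ℝ g x) (h0 : g x ≠ 0) (i : Fin d) :
    pd i (fun y => f y / g y) x = (pd i f x * g x - f x * pd i g x) / (g x)^2 := by
  have h1 : pd i (fun y => f y * (g y)⁻¹) x = pd i f x * (g x)⁻¹ + f x * pd i (fun y => (g y)⁻¹) x :=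
    pd_mul hf (diff_inv hg h0) i
  have h2 := pd_inv hg h0 i
  calc pd i (fun y => f y / g y) x = pd i (fun y => f y * (g y)⁻¹) x := by
        apply pd_congr; intro y; rw [div_eq_mul_inv]
    _ = _ := by rw [h1, h2]; field_simp; ring

section Slice
variable {F : ℝ × E d → ℝ}

lemma slice_x_hasFDerivAt (hF : DifferentiableAt ℝ F (t, x)) :
    HasFDerivAt (fun y => F (t, y)) ((fderiv ℝ F (t, x)).comp (ContinuousLinearMap.inr ℝ ℝ (E d))) x :=
  hF.hasFDerivAt.comp x (hasFDerivAt_prodMk_right t x)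

lemma pd_slice (hF : DifferentiableAt ℝ F (t, x)) (i : Fin d) :
    pd i (fun y => F (t, y)) x = fderiv ℝ F (t, x) (0, EuclideanSpace.single i 1) := by
  rw [pd, (slice_x_hasFDerivAt hF).fderiv]; rfl

lemma slice_t_hasDerivAt (hF : DifferentiableAt ℝ F (t, x)) :
    HasDerivAt (fun s => F (s, x)) (fderiv ℝ F (t, x) (1, 0)) t := by
  have := (hF.hasFDerivAt.comp t (hasFDerivAt_prodMk_left t x)).hasDerivAt
  simpa [Function.comp_def] using this

-- mixed second derivatives
lemma hasDerivAt_t_fderiv (hF : ContDiff ℝ 2 F) (w : ℝ × E d) :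
    HasDerivAt (fun s => fderiv ℝ F (s, x) w)
      (fderiv ℝ (fderiv ℝ F) (t, x) (1, 0) w) t := by
  have hF' : DifferentiableAt ℝ (fderiv ℝ F) (t, x) :=
    ((hF.fderiv_right (m := 1) (by norm_num)).differentiable (by norm_num)).differentiableAt
  have h1 : HasFDerivAt (fun s : ℝ => fderiv ℝ F (s, x))
      ((fderiv ℝ (fderiv ℝ F) (t, x)).comp (ContinuousLinearMap.inl ℝ ℝ (E d))) t :=
    hF'.hasFDerivAt.comp t (hasFDerivAt_prodMk_left t x)
  have h2 := ((ContinuousLinearMap.apply ℝ ℝ w).hasFDerivAt.comp t h1).hasDerivAt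
  simpa [Function.comp_def] using h2

lemma hasFDerivAt_x_fderiv (hF : ContDiff ℝ 2 F) (w : ℝ × E d) :
    HasFDerivAt (fun y => fderiv ℝ F (t, y) w)
      ((ContinuousLinearMap.apply ℝ ℝ w).comp
        ((fderiv ℝ (fderiv ℝ F) (t, x)).comp (ContinuousLinearMap.inr ℝ ℝ (E d)))) x := by
  have hF' : DifferentiableAt ℝ (fderiv ℝ F) (t, x) :=
    ((hF.fderiv_right (m := 1) (by norm_num)).differentiable (by norm_num)).differentiableAt
  have h1 : HasFDerivAt (fun y : E d => fderiv ℝ F (t, y))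
      ((fderiv ℝ (fderiv ℝ F) (t, x)).comp (ContinuousLinearMap.inr ℝ ℝ (E d))) x :=
    hF'.hasFDerivAt.comp x (hasFDerivAt_prodMk_right t x)
  exact (ContinuousLinearMap.apply ℝ ℝ w).hasFDerivAt.comp x h1

lemma mixed_symm (hF : ContDiff ℝ 2 F) (t : ℝ) (x : E d) (v w : ℝ × E d) :
    fderiv ℝ (fderiv ℝ F) (t, x) v w = fderiv ℝ (fderiv ℝ F) (t, x) w v :=
  (hF.contDiffAt.isSymmSndFDerivAt (by simp)) v w

end Slice

lemma contDiff_pd {f : E d → ℝ} (hf : ContDiff ℝ 3 f) (b : Fin d) :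
    ContDiff ℝ 2 (fun y => pd b f y) := by
  unfold pd
  exact (ContinuousLinearMap.apply ℝ ℝ (EuclideanSpace.single b 1)).contDiff.comp
    (hf.fderiv_right (m := 2) (by norm_num))

lemma sum_algebra {n : ℕ} {P : ℝ} (hP : P ≠ 0) (Q Dm : Fin n → Fin n → ℝ)
    (u A' dA : Fin n → ℝ) :
    (1/2) * (∑ a, ∑ b, (Q a b * P⁻¹ + Dm a b * u b * (-u a / P^2)))
      + (1/2) * (∑ a, ∑ b, (u a / P) * Dm a b * (u b / P))
      - (∑ a, A' a * (u a / P)) - (∑ a, dA a)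
    = (-(∑ a, (dA a * P + A' a * u a)) + (1/2) * ∑ a, ∑ b, Q a b) / P := by
  have h1 : (∑ a : Fin n, ∑ b, (Q a b * P⁻¹ + Dm a b * u b * (-u a / P^2)))
      + (∑ a : Fin n, ∑ b, (u a / P) * Dm a b * (u b / P))
      = (∑ a : Fin n, ∑ b, Q a b) / P := by
    rw [← Finset.sum_add_distrib, Finset.sum_div]
    refine Finset.sum_congr rfl fun a _ => ?_
    rw [← Finset.sum_add_distrib, Finset.sum_div]
    refine Finset.sum_congr rfl fun b _ => ?_
    field_simp
    ring
  have h4 : ∑ a, (dA a * P + A' a * u a) = (∑ a : Fin n, dA a) * P + ∑ a : Fin n, A' a * u a := by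
    rw [Finset.sum_add_distrib, ← Finset.sum_mul]
  have h3 : (∑ a : Fin n, A' a * (u a / P)) = (∑ a : Fin n, A' a * u a) / P := by
    rw [Finset.sum_div]
    exact Finset.sum_congr rfl fun a _ => by ring
  have h5 : (1/2:ℝ) * (∑ a : Fin n, ∑ b, (Q a b * P⁻¹ + Dm a b * u b * (-u a / P^2)))
      + (1/2) * (∑ a : Fin n, ∑ b, (u a / P) * Dm a b * (u b / P))
      = (1/2) * ((∑ a : Fin n, ∑ b, Q a b) / P) := by
    rw [← mul_add, h1]
  rw [h5, h3, h4]
  field_simp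
  ring

/-- If a positive density `p` solves the divergence-form Fokker–Planck equation
`∂ₜ p = -∇·(A p) + (1/2)∇·(D ∇p)`, then the score `S = ∇ log p` solves the Score-fPDE
`∂ₜ S = ∇[(1/2)∇·(D S) + (1/2)⟨S, D S⟩ - ⟨A, S⟩ - ∇·A]` (componentwise). -/
theorem stmt_11 (d : ℕ) (hd : 1 ≤ d)
    (A : ℝ → EuclideanSpace ℝ (Fin d) → EuclideanSpace ℝ (Fin d))
    (hA : ContDiff ℝ 2 fun tx : ℝ × EuclideanSpace ℝ (Fin d) => A tx.1 tx.2)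
    (D : ℝ → EuclideanSpace ℝ (Fin d) → Fin d → Fin d → ℝ)
    (hD : ∀ t i j, ContDiff ℝ 2 fun x => D t x i j)
    (p : ℝ → EuclideanSpace ℝ (Fin d) → ℝ)
    (hpos : ∀ t x, 0 < p t x)
    (hreg : ContDiff ℝ 3 fun tx : ℝ × EuclideanSpace ℝ (Fin d) => p tx.1 tx.2)
    (hFP : ∀ t x, deriv (fun s => p s x) t
      = -(∑ i, pd i (fun y => A t y i * p t y) x)
        + (1 / 2) * ∑ i, pd i (fun y => ∑ j, D t y i j * pd j (p t) y) x) :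
    ∀ t x (i : Fin d),
      deriv (fun s => pd i (fun z => Real.log (p s z)) x) t
        = pd i (fun y =>
            (1 / 2) * ∑ a, pd a (fun z =>
                ∑ b, D t z a b * pd b (fun w => Real.log (p t w)) z) y
              + (1 / 2) * ∑ a, ∑ b,
                  pd a (fun w => Real.log (p t w)) y * D t y a b *
                    pd b (fun w => Real.log (p t w)) y
              - ∑ a, A t y a * pd a (fun w => Real.log (p t w)) y
              - ∑ a, pd a (fun z => A t z a) y) x := by
  intro t x i
  have hF2 : ContDiff ℝ 2 (fun tx : ℝ × EuclideanSpace ℝ (Fin d) => p tx.1 tx.2) :=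
    hreg.of_le (by norm_num)
  have hslice : ∀ s : ℝ, ContDiff ℝ 3 (p s) := fun s =>
    hreg.comp (ContDiff.prodMk (contDiff_const (c := s)) contDiff_id)
  have dP : ∀ (s : ℝ) (y : E d), DifferentiableAt ℝ (p s) y := fun s y =>
    ((hslice s).differentiable (by norm_num)).differentiableAt
  have hne : ∀ s y, p s y ≠ 0 := fun s y => (hpos s y).ne'
  have hq : ∀ (s : ℝ) (j : Fin d) (y : E d),
      pd j (fun w => Real.log (p s w)) y = pd j (p s) y / p s y := fun s j y =>
    pd_log (dP s y) (hne s y) j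
  have dPd : ∀ (b : Fin d) (y : E d), DifferentiableAt ℝ (fun z => pd b (p t) z) y := fun b y =>
    ((contDiff_pd (hslice t) b).differentiable two_ne_zero).differentiableAt
  have hDt : ∀ (a b : Fin d) (y : E d), DifferentiableAt ℝ (fun z => D t z a b) y := fun a b y =>
    ((hD t a b).differentiable two_ne_zero).differentiableAt
  have dA : ∀ (a : Fin d) (y : E d), DifferentiableAt ℝ (fun z => A t z a) y := by
    intro a y
    have h1 : ContDiff ℝ 2 (fun z : E d => A t z a) :=
      (EuclideanSpace.proj a : EuclideanSpace ℝ (Fin d) →L[ℝ] ℝ).contDiff.comp (hA.comp (ContDiff.prodMk (contDiff_const (c := t)) contDiff_id))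
    exact (h1.differentiable two_ne_zero).differentiableAt
  have dinv : ∀ y : E d, DifferentiableAt ℝ (fun z => (p t z)⁻¹) y := fun y =>
    diff_inv (dP t y) (hne t y)
  -- the bracket equals ∂ₜp / p pointwise
  have hBH : ∀ y : E d,
      (1 / 2) * ∑ a, pd a (fun z =>
          ∑ b, D t z a b * pd b (fun w => Real.log (p t w)) z) y
        + (1 / 2) * ∑ a, ∑ b,
            pd a (fun w => Real.log (p t w)) y * D t y a b *
              pd b (fun w => Real.log (p t w)) y
        - ∑ a, A t y a * pd a (fun w => Real.log (p t w)) y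
        - ∑ a, pd a (fun z => A t z a) y
      = deriv (fun s => p s y) t / p t y := by
    intro y
    rw [hFP t y]
    have e1 : ∀ a : Fin d,
        pd a (fun z => ∑ b, D t z a b * pd b (fun w => Real.log (p t w)) z) y
          = ∑ b, (pd a (fun z => D t z a b * pd b (p t) z) y * (p t y)⁻¹
              + D t y a b * pd b (p t) y * (-pd a (p t) y / (p t y) ^ 2)) := by
      intro a
      have einner : (fun z => ∑ b, D t z a b * pd b (fun w => Real.log (p t w)) z)
          = fun z => ∑ b, D t z a b * pd b (p t) z * (p t z)⁻¹ := by
        funext z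
        refine Finset.sum_congr rfl fun b _ => ?_
        rw [hq t b z]
        ring
      rw [einner, pd_sum _ (fun b _ => ((hDt a b y).fun_mul (dPd b y)).fun_mul (dinv y)) a]
      refine Finset.sum_congr rfl fun b _ => ?_
      rw [pd_mul ((hDt a b y).fun_mul (dPd b y)) (dinv y) a, pd_inv (dP t y) (hne t y) a]
    have E1 : ∑ a, pd a (fun z => ∑ b, D t z a b * pd b (fun w => Real.log (p t w)) z) y
        = ∑ a : Fin d, ∑ b, (pd a (fun z => D t z a b * pd b (p t) z) y * (p t y)⁻¹
            + D t y a b * pd b (p t) y * (-pd a (p t) y / (p t y) ^ 2)) :=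
      Finset.sum_congr rfl fun a _ => e1 a
    have E2 : ∑ a : Fin d, ∑ b,
        pd a (fun w => Real.log (p t w)) y * D t y a b * pd b (fun w => Real.log (p t w)) y
        = ∑ a : Fin d, ∑ b, (pd a (p t) y / p t y) * D t y a b * (pd b (p t) y / p t y) := by
      refine Finset.sum_congr rfl fun a _ => Finset.sum_congr rfl fun b _ => ?_
      rw [hq t a y, hq t b y]
    have E3 : ∑ a, A t y a * pd a (fun w => Real.log (p t w)) y
        = ∑ a : Fin d, A t y a * (pd a (p t) y / p t y) := by
      refine Finset.sum_congr rfl fun a _ => ?_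
      rw [hq t a y]
    have E4 : ∑ a, pd a (fun z => A t z a * p t z) y
        = ∑ a : Fin d, (pd a (fun z => A t z a) y * p t y + A t y a * pd a (p t) y) :=
      Finset.sum_congr rfl fun a _ => pd_mul (dA a y) (dP t y) a
    have E5 : ∑ a, pd a (fun z => ∑ b, D t z a b * pd b (p t) z) y
        = ∑ a : Fin d, ∑ b, pd a (fun z => D t z a b * pd b (p t) z) y :=
      Finset.sum_congr rfl fun a _ =>
        pd_sum _ (fun b _ => (hDt a b y).fun_mul (dPd b y)) a
    rw [E1, E2, E3, E4, E5]
    exact sum_algebra (hne t y)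
      (fun a b => pd a (fun z => D t z a b * pd b (p t) z) y)
      (fun a b => D t y a b)
      (fun a => pd a (p t) y)
      (fun a => A t y a)
      (fun a => pd a (fun z => A t z a) y)
  rw [pd_congr hBH i x]
  -- now prove ∂ₜ (∂ᵢ log p) = ∂ᵢ (∂ₜ p / p) via symmetry of second derivatives
  set Fc : ℝ × E d → ℝ := fun tx => p tx.1 tx.2 with hFc
  have hFdiff : ∀ (s : ℝ) (y : E d), DifferentiableAt ℝ Fc (s, y) := fun s y =>
    (hreg.differentiable (by norm_num)).differentiableAt
  set w : ℝ × E d := (0, EuclideanSpace.single i 1) with hw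
  -- LHS
  have eL : (fun s => pd i (fun z => Real.log (p s z)) x)
      = fun s => fderiv ℝ Fc (s, x) w / p s x := by
    funext s
    rw [hq s i x]
    have h2 : pd i (p s) x = fderiv ℝ Fc (s, x) w := pd_slice (hFdiff s x) i
    rw [h2]
  rw [eL]
  have hg : HasDerivAt (fun s => fderiv ℝ Fc (s, x) w)
      (fderiv ℝ (fderiv ℝ Fc) (t, x) (1, 0) w) t := hasDerivAt_t_fderiv hF2 w
  have hh : HasDerivAt (fun s => p s x) (fderiv ℝ Fc (t, x) (1, 0)) t :=
    slice_t_hasDerivAt (hFdiff t x)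
  have hLHS := (hg.fun_div hh (hne t x)).deriv
  rw [hLHS]
  -- RHS
  have eH : (fun y => deriv (fun s => p s y) t / p t y)
      = fun y => fderiv ℝ Fc (t, y) (1, 0) / p t y := by
    funext y
    have h1 : deriv (fun s => p s y) t = fderiv ℝ Fc (t, y) (1, 0) :=
      (slice_t_hasDerivAt (hFdiff t y)).deriv
    rw [h1]
  rw [eH]
  have hnum : DifferentiableAt ℝ (fun y => fderiv ℝ Fc (t, y) (1, 0)) x :=
    (hasFDerivAt_x_fderiv hF2 (1, 0)).differentiableAt
  rw [pd_div hnum (dP t x) (hne t x) i]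
  have hpdnum : pd i (fun y => fderiv ℝ Fc (t, y) (1, 0)) x
      = fderiv ℝ (fderiv ℝ Fc) (t, x) w (1, 0) := by
    unfold pd
    rw [(hasFDerivAt_x_fderiv hF2 (1, 0)).fderiv]
    rfl
  have hpdden : pd i (p t) x = fderiv ℝ Fc (t, x) w := pd_slice (hFdiff t x) i
  rw [hpdnum, hpdden, mixed_symm hF2 t x (1, 0) w]
  ring
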